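/- arXiv:1510.03660 — 5 statements merged into one kernel-verified Lean document; each statement's English description precedes it below -/
import Mathlib

section
/- Let N ≥ 3 be an integer and a ∈ ℝ with −((N−2)/2)² < a < 0, and set α = (N−2)/2 − √(((N−2)/2)² + a), so that α > 0. Define u : (ℝ^N ∖ {0}) × ℝ → ℂ by u(x,t) = (1+t²)^(−N/4+α/2) · |x|^(−α) · exp(−|x|²/(4(1+t²))) · exp(i t |x|²/(4(1+t²))) · exp(−i (N/2 − α) arctan t). Then: (i) the function x ↦ u(x,0) is integrable and square-integrable on ℝ^N; (ii) for every t ∈ ℝ, the function x ↦ u(x,t) is not essentially bounded on ℝ^N with respect to Lebesgue measure, i.e. its essential supremum is +∞. In particular this solution of the Schrödinger equation with potential a/|x|² has L¹ initial datum but never lies in L^∞, so the classical L¹→L^∞ decay estimate fails when a < 0. -/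
open MeasureTheory Real

/-- `α = (N−2)/2 − √(((N−2)/2)² + a)`. -/
noncomputable def alphaPar (N : ℕ) (a : ℝ) : ℝ :=
  ((N : ℝ) - 2) / 2 - Real.sqrt ((((N : ℝ) - 2) / 2) ^ 2 + a)

/-!
The two oscillating factors of `u` have modulus one, so
`|u(x,t)| = (1+t²)^(-N/4+α/2) |x|^(-α) exp(-|x|²/(4(1+t²)))`.
Since `0 < α` and `2α < N`, integration in polar coordinates shows that `u(·,0)` and `|u(·,0)|²`
are integrable. For every `t`, the factor `|x|^(-α)` makes `|u(x,t)|` tend to `∞` as `x → 0`, and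
every punctured neighbourhood of `0` has positive Lebesgue measure, so no essential bound exists.
-/

open Filter Topology Set Module
open scoped ENNReal

lemma integrable_norm_rpow_neg_mul_exp_neg_mul_sq {E : Type*} [NormedAddCommGroup E]
    [NormedSpace ℝ E] [Nontrivial E] [FiniteDimensional ℝ E] [MeasurableSpace E] [BorelSpace E]
    (μ : Measure E) [μ.IsAddHaarMeasure] {p b : ℝ} (hp : p < finrank ℝ E) (hb : 0 < b) :
    Integrable (fun x : E => ‖x‖ ^ (-p) * exp (-b * ‖x‖ ^ 2)) μ := by
  refine (integrable_fun_norm_addHaar μ (f := fun y => y ^ (-p) * exp (-b * y ^ 2))).2 ?_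
  have hs : -1 < (finrank ℝ E - 1 : ℕ) - p := by
    have : 1 ≤ finrank ℝ E := finrank_pos
    push_cast [this]
    linarith
  refine (integrableOn_rpow_mul_exp_neg_mul_sq hb hs).congr_fun (fun y (hy : 0 < y) => ?_)
    measurableSet_Ioi
  rw [smul_eq_mul, ← mul_assoc, ← Real.rpow_natCast, ← rpow_add hy, sub_eq_add_neg]

lemma tendsto_norm_rpow_neg_mul_exp_neg_mul_sq {E : Type*} [NormedAddCommGroup E] {p : ℝ}
    (hp : 0 < p) (b : ℝ) :
    Tendsto (fun x : E => ‖x‖ ^ (-p) * exp (-b * ‖x‖ ^ 2)) (𝓝[≠] 0) atTop := by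
  have hpow : Tendsto (fun x : E => ‖x‖ ^ (-p)) (𝓝[≠] 0) atTop :=
    (tendsto_rpow_neg_nhdsGT_zero (neg_neg_of_pos hp)).comp tendsto_norm_nhdsNE_zero
  have hexp : Tendsto (fun x : E => exp (-b * ‖x‖ ^ 2)) (𝓝[≠] 0) (𝓝 1) := by
    refine (Continuous.tendsto' (by fun_prop) 0 1 ?_).mono_left nhdsWithin_le_nhds
    simp
  exact hpow.atTop_mul_pos one_pos hexp

section EssSup

variable {X : Type*} [TopologicalSpace X] [MeasurableSpace X] {μ : Measure X}
  [μ.IsOpenPosMeasure] [NullSingletonClass μ] {x : X}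

lemma measure_pos_of_mem_nhdsNE {s : Set X} (hs : s ∈ 𝓝[≠] x) : 0 < μ s := by
  have hs' : s ∪ {x} ∈ 𝓝 x := by
    rw [← nhdsNE_sup_pure]
    exact ⟨mem_of_superset hs subset_union_left, by simp⟩
  calc 0 < μ (s ∪ {x}) := Measure.measure_pos_of_mem_nhds μ hs'
    _ ≤ μ s + μ {x} := measure_union_le s {x}
    _ = μ s := by simp

lemma essSup_eq_top_of_tendsto_nhdsNE {f : X → ℝ≥0∞} (hf : Tendsto f (𝓝[≠] x) (𝓝 ∞)) :
    essSup f μ = ∞ := by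
  by_contra h
  have hbig : {y | essSup f μ < f y} ∈ 𝓝[≠] x :=
    hf.eventually (lt_mem_nhds (lt_top_iff_ne_top.2 h))
  have hnull : μ {y | essSup f μ < f y} = 0 := by
    simpa only [not_le] using ae_iff.1 (ENNReal.ae_le_essSup f)
  exact (measure_pos_of_mem_nhdsNE hbig).ne' hnull

end EssSup

lemma alphaPar_pos {N : ℕ} (hN : 3 ≤ N) {a : ℝ} (ha : a < 0) : 0 < alphaPar N a := by
  have hc : 0 < ((N : ℝ) - 2) / 2 := by
    have : (3 : ℝ) ≤ N := by exact_mod_cast hN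
    linarith
  rw [alphaPar, sub_pos, sqrt_lt' hc]
  linarith

lemma alphaPar_le (N : ℕ) (a : ℝ) : alphaPar N a ≤ ((N : ℝ) - 2) / 2 :=
  sub_le_self _ (sqrt_nonneg _)

theorem no_Linfty_bound_for_schrodinger_general
    (N : ℕ) (hN : 3 ≤ N) (a : ℝ) (ha' : a < 0)
    (u : EuclideanSpace ℝ (Fin N) → ℝ → ℂ)
    (hu : ∀ (x : EuclideanSpace ℝ (Fin N)) (t : ℝ), u x t =
      (((1 + t ^ 2) ^ (-(N : ℝ) / 4 + alphaPar N a / 2) : ℝ) : ℂ) *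
      ((‖x‖ ^ (-(alphaPar N a)) : ℝ) : ℂ) *
      ((Real.exp (-‖x‖ ^ 2 / (4 * (1 + t ^ 2))) : ℝ) : ℂ) *
      Complex.exp (Complex.I * ((t * ‖x‖ ^ 2 / (4 * (1 + t ^ 2)) : ℝ) : ℂ)) *
      Complex.exp (-Complex.I * ((((N : ℝ) / 2 - alphaPar N a) * Real.arctan t : ℝ) : ℂ))) :
    0 < alphaPar N a ∧
    Integrable (fun x => u x 0) (volume : Measure (EuclideanSpace ℝ (Fin N))) ∧
    Integrable (fun x => ‖u x 0‖ ^ 2) (volume : Measure (EuclideanSpace ℝ (Fin N))) ∧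
    ∀ t : ℝ, essSup (fun x => (‖u x t‖₊ : ENNReal))
      (volume : Measure (EuclideanSpace ℝ (Fin N))) = ⊤ := by
  set α := alphaPar N a
  have hα : 0 < α := alphaPar_pos hN ha'
  have h2α : 2 * α < finrank ℝ (EuclideanSpace ℝ (Fin N)) := by
    rw [finrank_euclideanSpace_fin]; linarith [alphaPar_le N a]
  have : Nontrivial (EuclideanSpace ℝ (Fin N)) :=
    Module.nontrivial_of_finrank_pos (R := ℝ) (by rw [finrank_euclideanSpace_fin]; omega)
  have hnorm : ∀ x t, ‖u x t‖ = (1 + t ^ 2) ^ (-(N : ℝ) / 4 + α / 2) *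
      (‖x‖ ^ (-α) * exp (-(4 * (1 + t ^ 2))⁻¹ * ‖x‖ ^ 2)) := by
    intro x t
    have hdiv : -‖x‖ ^ 2 / (4 * (1 + t ^ 2)) = -(4 * (1 + t ^ 2))⁻¹ * ‖x‖ ^ 2 := by ring
    simp only [hu, norm_mul, Complex.norm_real, Complex.norm_exp, Complex.mul_re, Complex.neg_re,
      Complex.neg_im, Complex.I_re, Complex.I_im, Complex.ofReal_re, Complex.ofReal_im, zero_mul,
      mul_zero, sub_zero, neg_zero, exp_zero, mul_one, Real.norm_eq_abs, hdiv]
    rw [abs_of_nonneg (by positivity), abs_of_nonneg (by positivity), abs_of_nonneg (by positivity),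
      mul_assoc]
  have hu0 : ∀ x, u x 0 = ((‖x‖ ^ (-α) * exp (-4⁻¹ * ‖x‖ ^ 2) : ℝ) : ℂ) := by
    intro x
    rw [hu]
    norm_num [div_eq_inv_mul]
  refine ⟨hα, ?_, ?_, fun t => ?_⟩
  · exact ((integrable_norm_rpow_neg_mul_exp_neg_mul_sq volume (b := 4⁻¹) (by linarith)
      (by norm_num)).ofReal (𝕜 := ℂ)).congr (.of_forall fun x => (hu0 x).symm)
  · refine (integrable_norm_rpow_neg_mul_exp_neg_mul_sq volume h2α (b := 2⁻¹) (by norm_num)).congr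
      (.of_forall fun x => ?_)
    dsimp only
    rw [hu0, Complex.norm_real, norm_eq_abs, sq_abs, mul_pow, ← rpow_mul_natCast (norm_nonneg x),
      ← exp_nat_mul]
    ring_nf
  · refine essSup_eq_top_of_tendsto_nhdsNE (x := 0) ?_
    have hA : 0 < (1 + t ^ 2) ^ (-(N : ℝ) / 4 + α / 2) := by positivity
    have hblow : Tendsto (fun x => ‖u x t‖) (𝓝[≠] 0) atTop := by
      simpa only [hnorm] using
        (tendsto_norm_rpow_neg_mul_exp_neg_mul_sq hα ((4 * (1 + t ^ 2))⁻¹)).const_mul_atTop hA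
    simpa only [Function.comp_def, ofReal_norm, enorm_eq_nnnorm] using
      ENNReal.tendsto_ofReal_atTop.comp hblow

theorem no_Linfty_bound_for_schrodinger
    (N : ℕ) (hN : 3 ≤ N) (a : ℝ) (ha : -((((N : ℝ) - 2) / 2) ^ 2) < a) (ha' : a < 0)
    (u : EuclideanSpace ℝ (Fin N) → ℝ → ℂ)
    (hu : ∀ (x : EuclideanSpace ℝ (Fin N)) (t : ℝ), u x t =
      (((1 + t ^ 2) ^ (-(N : ℝ) / 4 + alphaPar N a / 2) : ℝ) : ℂ) *
      ((‖x‖ ^ (-(alphaPar N a)) : ℝ) : ℂ) *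
      ((Real.exp (-‖x‖ ^ 2 / (4 * (1 + t ^ 2))) : ℝ) : ℂ) *
      Complex.exp (Complex.I * ((t * ‖x‖ ^ 2 / (4 * (1 + t ^ 2)) : ℝ) : ℂ)) *
      Complex.exp (-Complex.I * ((((N : ℝ) / 2 - alphaPar N a) * Real.arctan t : ℝ) : ℂ))) :
    0 < alphaPar N a ∧
    Integrable (fun x => u x 0) (volume : Measure (EuclideanSpace ℝ (Fin N))) ∧
    Integrable (fun x => ‖u x 0‖ ^ 2) (volume : Measure (EuclideanSpace ℝ (Fin N))) ∧
    ∀ t : ℝ, essSup (fun x => (‖u x t‖₊ : ENNReal))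
      (volume : Measure (EuclideanSpace ℝ (Fin N))) = ⊤ :=
  no_Linfty_bound_for_schrodinger_general N hN a ha' u hu
end

section
/- Let N ≥ 3 be an integer, a ∈ ℝ with a > −((N−2)/2)², α = (N−2)/2 − √(((N−2)/2)² + a), and n ∈ ℕ. Then V_n is an eigenfunction of the quantum harmonic oscillator with inverse-square potential: for every x ∈ ℝ^N with x ≠ 0, −Δ V_n(x) + a V_n(x)/|x|² + (|x|²/4) V_n(x) = (2n − α + N/2) V_n(x). -/
open MeasureTheory Real

/-- `P_n(t) = Σ_{i=0}^n [(−n)_i / ((N/2 − α)_i)] · t^i / i!`. -/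
noncomputable def PPol (N : ℕ) (a : ℝ) (n : ℕ) (t : ℝ) : ℝ :=
  ∑ i ∈ Finset.range (n + 1),
    ((ascPochhammer ℝ i).eval (-(n : ℝ)) / (ascPochhammer ℝ i).eval ((N : ℝ) / 2 - alphaPar N a))
      * t ^ i / (Nat.factorial i)

/-- `V_n(x) = |x|^(−α) e^(−|x|²/4) P_n(|x|²/2)`. -/
noncomputable def VFun (N : ℕ) (a : ℝ) (n : ℕ) (x : EuclideanSpace ℝ (Fin N)) : ℝ :=
  ‖x‖ ^ (-(alphaPar N a)) * Real.exp (-‖x‖ ^ 2 / 4) * PPol N a n (‖x‖ ^ 2 / 2)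

/-- The Laplacian: the sum of the second partial derivatives in the coordinate
directions. -/
noncomputable def laplacian {N : ℕ} {F : Type*} [NormedAddCommGroup F] [NormedSpace ℝ F]
    (f : EuclideanSpace ℝ (Fin N) → F) (x : EuclideanSpace ℝ (Fin N)) : F :=
  ∑ i : Fin N,
    fderiv ℝ (fun y => fderiv ℝ f y (EuclideanSpace.single i (1 : ℝ))) x
      (EuclideanSpace.single i (1 : ℝ))

/-!
Put `r = ‖x‖²`. For radial functions `Δ (g ∘ ‖·‖²) = 4 r g'' + 2 N g'`, and every `r`-derivative of
a profile `r ^ c * exp (-r / 4) * p (r / 2)` is again a profile, with `c` lowered by one and `p(t)`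
replaced by `c p - t p / 2 + t p'`. Since `V_n(x)` is the profile at `r = ‖x‖²` with `c = -α/2`,
`p = P_n`, and `α² - (N-2) α = a`, the eigenvalue equation collapses to a polynomial identity in
`t = r / 2`, which is `-4 t` times Kummer's equation `t P'' + (N/2 - α - t) P' + n P = 0`. That
equation holds for `P_n = ∑ c_i t^i` because `(i+1) (N/2 - α + i) c_{i+1} = (i-n) c_i`.
-/

open Polynomial

theorem laplacian_comp_norm_sq {N : ℕ} {g g' g'' : ℝ → ℝ}
    (hg : ∀ r, 0 < r → HasDerivAt g (g' r) r) (hg' : ∀ r, 0 < r → HasDerivAt g' (g'' r) r)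
    {x : EuclideanSpace ℝ (Fin N)} (hx : x ≠ 0) :
    laplacian (fun y => g (‖y‖ ^ 2)) x = 4 * ‖x‖ ^ 2 * g'' (‖x‖ ^ 2) + 2 * N * g' (‖x‖ ^ 2) := by
  have hderiv (y : EuclideanSpace ℝ (Fin N)) (hy : y ≠ 0) :
      HasFDerivAt (fun y => g (‖y‖ ^ 2)) (g' (‖y‖ ^ 2) • 2 • innerSL ℝ y) y :=
    (hg _ (by positivity)).comp_hasFDerivAt y (hasStrictFDerivAt_norm_sq y).hasFDerivAt
  have hpartial (i : Fin N) :
      (fun y => fderiv ℝ (fun y => g (‖y‖ ^ 2)) y (EuclideanSpace.single i 1))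
        =ᶠ[nhds x] fun y => g' (‖y‖ ^ 2) * (2 * y i) := by
    filter_upwards [isOpen_compl_singleton.mem_nhds hx] with y hy
    simp [(hderiv y hy).fderiv, EuclideanSpace.inner_single_right]
  have hterm (i : Fin N) :
      fderiv ℝ (fun y => fderiv ℝ (fun y => g (‖y‖ ^ 2)) y (EuclideanSpace.single i 1)) x
        (EuclideanSpace.single i 1) = 4 * x i ^ 2 * g'' (‖x‖ ^ 2) + 2 * g' (‖x‖ ^ 2) := by
    have hsecond : HasFDerivAt (fun y => g' (‖y‖ ^ 2) * (2 * y i)) _ x :=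
      ((hg' _ (by positivity)).comp_hasFDerivAt x (hasStrictFDerivAt_norm_sq x).hasFDerivAt).fun_mul
        ((EuclideanSpace.proj (𝕜 := ℝ) i).hasFDerivAt.const_mul 2)
    rw [(hpartial i).fderiv_eq, hsecond.fderiv]
    simp only [Function.comp_apply, add_apply, smul_apply,
      PiLp.proj_apply, PiLp.single_eq_same, smul_eq_mul, mul_one, coe_innerSL_apply,
      EuclideanSpace.inner_single_right, Real.ringHom_apply, one_mul, nsmul_eq_mul, Nat.cast_ofNat]
    ring
  rw [laplacian, Finset.sum_congr rfl fun i _ => hterm i, Finset.sum_add_distrib, ← Finset.sum_mul,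
    ← Finset.mul_sum, ← EuclideanSpace.real_norm_sq_eq]
  simp only [Finset.sum_const, Finset.card_univ, Fintype.card_fin, nsmul_eq_mul]
  ring

-- The terminating series `₁F₁(-n; b; t)`; `PPol N a n` is its evaluation at `b = N/2 - α`.
noncomputable def kummerPoly (b : ℝ) (n : ℕ) : ℝ[X] :=
  ∑ i ∈ Finset.range (n + 1),
    monomial i ((ascPochhammer ℝ i).eval (-(n : ℝ)) / ((ascPochhammer ℝ i).eval b * i.factorial))

theorem kummerPoly_coeff (b : ℝ) (n i : ℕ) :
    (kummerPoly b n).coeff i =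
      (ascPochhammer ℝ i).eval (-(n : ℝ)) / ((ascPochhammer ℝ i).eval b * i.factorial) := by
  rw [kummerPoly, finsetSum_coeff, Finset.sum_eq_single i]
  · simp
  · intro j _ hj
    simp [coeff_monomial, hj]
  · intro hi
    rw [ascPochhammer_eval_neg_coe_nat_of_lt (by simpa using hi)]
    simp

theorem kummerPoly_coeff_succ {b : ℝ} (hb : ∀ k : ℕ, b ≠ -k) (n i : ℕ) :
    ((i : ℝ) + 1) * (b + i) * (kummerPoly b n).coeff (i + 1) =
      ((i : ℝ) - n) * (kummerPoly b n).coeff i := by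
  have hpoch : (ascPochhammer ℝ i).eval b ≠ 0 := by
    rw [Ne, ascPochhammer_eval_eq_zero_iff]
    rintro ⟨k, -, hk⟩
    exact hb k (by linarith)
  have hbi : b + i ≠ 0 := fun h => hb i (by linarith)
  simp only [kummerPoly_coeff, ascPochhammer_succ_eval, Nat.factorial_succ]
  push_cast
  field_simp
  ring

theorem kummerPoly_ode {b : ℝ} (hb : ∀ k : ℕ, b ≠ -k) (n : ℕ) :
    X * derivative (derivative (kummerPoly b n)) + (C b - X) * derivative (kummerPoly b n) =
      -(C (n : ℝ) * kummerPoly b n) := by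
  ext k
  rcases k with _ | k
  · simp only [coeff_add, coeff_sub, sub_mul, mul_coeff_zero, coeff_X_zero, coeff_C_zero,
      coeff_derivative, coeff_neg]
    linear_combination kummerPoly_coeff_succ hb n 0
  · simp only [sub_mul, coeff_add, coeff_X_mul, coeff_derivative, Nat.cast_add, Nat.cast_one,
      coeff_sub, coeff_C_mul, map_natCast, coeff_neg, coeff_natCast_mul]
    linear_combination (norm := (push_cast; ring1)) kummerPoly_coeff_succ hb n (k + 1)

noncomputable def radialProfile (c : ℝ) (p : ℝ[X]) (r : ℝ) : ℝ :=
  r ^ c * Real.exp (-r / 4) * p.eval (r / 2)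

noncomputable def radialProfileDerivPoly (c : ℝ) (p : ℝ[X]) : ℝ[X] :=
  C c * p - C 2⁻¹ * (X * p) + X * derivative p

theorem hasDerivAt_radialProfile (c : ℝ) (p : ℝ[X]) {r : ℝ} (hr : r ≠ 0) :
    HasDerivAt (radialProfile c p) (radialProfile (c - 1) (radialProfileDerivPoly c p) r) r := by
  have hpow : HasDerivAt (fun s : ℝ => s ^ c) (c * r ^ (c - 1)) r :=
    Real.hasDerivAt_rpow_const (Or.inl hr)
  have hexp : HasDerivAt (fun s : ℝ => Real.exp (-s / 4)) (Real.exp (-r / 4) * (-1 / 4)) r := by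
    simpa using ((hasDerivAt_id r).neg.div_const 4).exp
  have heval :
      HasDerivAt (fun s : ℝ => p.eval (s / 2)) ((derivative p).eval (r / 2) * (1 / 2)) r := by
    simpa [Function.comp_def] using (p.hasDerivAt (r / 2)).comp r ((hasDerivAt_id r).div_const 2)
  refine ((hpow.fun_mul hexp).fun_mul heval).congr_deriv ?_
  simp only [radialProfile, radialProfileDerivPoly, eval_add, eval_sub, eval_mul, eval_C, eval_X]
  rw [show r ^ c = r ^ (c - 1) * r by rw [← Real.rpow_add_one hr, sub_add_cancel]]
  ring

theorem radialProfileDerivPoly_of_kummer {d α ν : ℝ} {Q : ℝ[X]}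
    (hQ : X * derivative (derivative Q) + (C (d / 2 - α) - X) * derivative Q = -(C ν * Q)) :
    -(C 4 * radialProfileDerivPoly (-(α / 2) - 1) (radialProfileDerivPoly (-(α / 2)) Q)
        + C (2 * d) * radialProfileDerivPoly (-(α / 2)) Q)
      + C (α ^ 2 - (d - 2) * α) * Q + X ^ 2 * Q
      = C (2 * (2 * ν - α + d / 2)) * X * Q := by
  refine Polynomial.funext fun t => ?_
  have hQt := congrArg (eval t) hQ
  simp only [radialProfileDerivPoly, derivative_add, derivative_sub, derivative_mul, derivative_C,
    derivative_X, eval_add, eval_sub, eval_mul, eval_neg, eval_C, eval_X, eval_pow, eval_zero,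
    eval_one] at hQt ⊢
  linear_combination (-4 * t) * hQt

theorem radialProfile_eigen {a d α ν : ℝ} {Q : ℝ[X]} (ha : a = α ^ 2 - (d - 2) * α)
    (hQ : X * derivative (derivative Q) + (C (d / 2 - α) - X) * derivative Q = -(C ν * Q))
    {r : ℝ} (hr : r ≠ 0) :
    -(4 * r * radialProfile (-(α / 2) - 1 - 1)
          (radialProfileDerivPoly (-(α / 2) - 1) (radialProfileDerivPoly (-(α / 2)) Q)) r
        + 2 * d * radialProfile (-(α / 2) - 1) (radialProfileDerivPoly (-(α / 2)) Q) r)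
      + a * radialProfile (-(α / 2)) Q r / r
      + r / 4 * radialProfile (-(α / 2)) Q r
      = (2 * ν - α + d / 2) * radialProfile (-(α / 2)) Q r := by
  subst ha
  have hpoly := congrArg (eval (r / 2)) (radialProfileDerivPoly_of_kummer hQ)
  simp only [eval_add, eval_neg, eval_mul, eval_C, eval_X, eval_pow] at hpoly
  set c := -(α / 2)
  have hpow : r ^ c = r ^ (c - 1 - 1) * r * r := by
    rw [← Real.rpow_add_one hr, ← Real.rpow_add_one hr]
    ring_nf
  have hpow' : r ^ (c - 1) = r ^ (c - 1 - 1) * r := by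
    rw [← Real.rpow_add_one hr]
    ring_nf
  simp only [radialProfile, hpow, hpow']
  rw [mul_div_assoc, show ∀ y : ℝ, y * r * r * Real.exp (-r / 4) * eval (r / 2) Q / r
      = y * r * Real.exp (-r / 4) * eval (r / 2) Q from fun y => by field_simp]
  linear_combination (r ^ (c - 1 - 1) * r * Real.exp (-r / 4)) * hpoly

theorem eq_alphaPar_sq_sub_mul {N : ℕ} {a : ℝ} (ha : -((((N : ℝ) - 2) / 2) ^ 2) ≤ a) :
    a = alphaPar N a ^ 2 - ((N : ℝ) - 2) * alphaPar N a := by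
  have hsq := Real.sq_sqrt (neg_le_iff_add_nonneg'.mp ha)
  rw [alphaPar]
  linear_combination -hsq

theorem half_sub_alphaPar_pos (N : ℕ) (a : ℝ) : 0 < (N : ℝ) / 2 - alphaPar N a := by
  rw [alphaPar]
  linarith [Real.sqrt_nonneg ((((N : ℝ) - 2) / 2) ^ 2 + a)]

theorem VFun_eq_radialProfile (N : ℕ) (a : ℝ) (n : ℕ) :
    VFun N a n = fun y => radialProfile (-(alphaPar N a / 2))
      (kummerPoly ((N : ℝ) / 2 - alphaPar N a) n) (‖y‖ ^ 2) := by
  ext y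
  have hpow : (‖y‖ ^ 2) ^ (-(alphaPar N a / 2)) = ‖y‖ ^ (-alphaPar N a) := by
    rw [← Real.rpow_natCast, ← Real.rpow_mul (norm_nonneg y)]
    ring_nf
  simp only [VFun, radialProfile, PPol, kummerPoly, hpow, eval_finsetSum, eval_monomial]
  congr 1
  refine Finset.sum_congr rfl fun i _ => ?_
  field_simp

theorem VFun_eigenfunction_harmonic_oscillator_general
    (N : ℕ) (a : ℝ) (ha : a > -((((N : ℝ) - 2) / 2) ^ 2)) (n : ℕ) :
    ∀ (x : EuclideanSpace ℝ (Fin N)), x ≠ 0 →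
      - laplacian (VFun N a n) x + a * VFun N a n x / ‖x‖ ^ 2 +
        (‖x‖ ^ 2 / 4) * VFun N a n x =
      (2 * (n : ℝ) - alphaPar N a + (N : ℝ) / 2) * VFun N a n x := by
  intro x hx
  have hb (k : ℕ) : (N : ℝ) / 2 - alphaPar N a ≠ -k :=
    ((neg_nonpos.mpr k.cast_nonneg).trans_lt (half_sub_alphaPar_pos N a)).ne'
  rw [VFun_eq_radialProfile,
    laplacian_comp_norm_sq (fun r hr => hasDerivAt_radialProfile _ _ hr.ne')
      (fun r hr => hasDerivAt_radialProfile _ _ hr.ne') hx]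
  exact radialProfile_eigen (eq_alphaPar_sq_sub_mul ha.le) (kummerPoly_ode hb n) (by positivity)

theorem VFun_eigenfunction_harmonic_oscillator
    (N : ℕ) (hN : 3 ≤ N) (a : ℝ) (ha : a > -((((N : ℝ) - 2) / 2) ^ 2)) (n : ℕ) :
    ∀ (x : EuclideanSpace ℝ (Fin N)), x ≠ 0 →
      - laplacian (VFun N a n) x + a * VFun N a n x / ‖x‖ ^ 2 +
        (‖x‖ ^ 2 / 4) * VFun N a n x =
      (2 * (n : ℝ) - alphaPar N a + (N : ℝ) / 2) * VFun N a n x :=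
  VFun_eigenfunction_harmonic_oscillator_general N a ha n
end

section
/- Let N ≥ 3 be an integer, a ∈ ℝ with a > −((N−2)/2)², and α = (N−2)/2 − √(((N−2)/2)² + a). For all n, m ∈ ℕ with n ≠ m, the functions V_n and V_m are orthogonal in L²(ℝ^N): ∫_{ℝ^N} V_n(x) V_m(x) dx = 0. -/
open MeasureTheory Real

/-!
With `β = √(((N−2)/2)² + a)` (`betaPar`) one has `N/2 − α = 1 + β`, so `P_n` is a multiple of
the Laguerre polynomial `L_n^{(β)}`. In polar coordinates, and after `t = r²/2`, the integral
becomes `c ∫₀^∞ t^β e^{−t} P_n(t) P_m(t) dt`, and `∫₀^∞ t^{β+k} e^{−t} dt = Γ(1+β+k)`.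
Orthogonality thus reduces to `∑_j (−m)_j / ((1+β)_j j!) · Γ(1+β+i+j) = 0` for `i < m`. Since
`Γ(1+β+i+j) = Γ(1+β) (1+β)_j (1+β+j)_i` and `(−m)_j = (−1)^j j! C(m,j)`, this is the alternating
binomial sum of the degree-`i` polynomial `j ↦ (1+β+j)_i`, an `m`-th forward difference at `0`,
which vanishes.
-/

open Polynomial Finset
open scoped Nat

theorem Polynomial.sum_range_neg_one_pow_mul_choose_mul_eval_eq_zero {R : Type*} [CommRing R]
    {p : R[X]} {m : ℕ} (hp : p.natDegree < m) :
    ∑ j ∈ range (m + 1), (-1) ^ j * (m.choose j : R) * p.eval (j : R) = 0 := by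
  have h := congr_fun (fwdDiff_iter_eq_zero_of_degree_lt hp) 0
  rw [fwdDiff_iter_eq_sum_shift, Pi.zero_apply] at h
  have hsign (j : ℕ) (hj : j ≤ m) : (-1 : R) ^ m * (-1) ^ (m - j) = (-1) ^ j := by
    rw [← pow_add, show m + (m - j) = 2 * (m - j) + j by omega, pow_add, pow_mul, neg_one_sq,
      one_pow, one_mul]
  calc ∑ j ∈ range (m + 1), (-1) ^ j * (m.choose j : R) * p.eval (j : R)
      = (-1) ^ m * ∑ j ∈ range (m + 1), ((-1 : ℤ) ^ (m - j) * m.choose j) • p.eval (0 + j • 1) := by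
        rw [mul_sum]
        refine sum_congr rfl fun j hj => ?_
        simp [zsmul_eq_mul, ← mul_assoc, hsign j (by grind)]
    _ = 0 := by rw [h, mul_zero]

theorem ascPochhammer_eval_neg_natCast {R : Type*} [CommRing R] (m j : ℕ) :
    (ascPochhammer R j).eval (-(m : R)) = (-1) ^ j * (j ! * m.choose j) := by
  rw [ascPochhammer_eval_neg_eq_descPochhammer, descPochhammer_eval_eq_descFactorial,
    Nat.descFactorial_eq_factorial_mul_choose, Nat.cast_mul]

theorem Real.Gamma_add_nat_eq_mul_ascPochhammer {x : ℝ} (hx : 0 < x) (k : ℕ) :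
    Gamma (x + k) = Gamma x * (ascPochhammer ℝ k).eval x := by
  induction k with
  | zero => simp
  | succ k ih =>
    rw [Nat.cast_succ, ← add_assoc, Gamma_add_one (by positivity), ih, ascPochhammer_succ_eval]
    ring

/-- `∑ j, laguerreCoeff β n j * t ^ j` is `n! / (1 + β)_n • L_n^{(β)}(t)`. -/
noncomputable def laguerreCoeff (β : ℝ) (n j : ℕ) : ℝ :=
  (ascPochhammer ℝ j).eval (-(n : ℝ)) / ((ascPochhammer ℝ j).eval (1 + β) * j !)

section Laguerre

variable {β : ℝ}

theorem sum_laguerreCoeff_mul_Gamma_eq_zero (hβ : -1 < β) {i m : ℕ} (him : i < m) :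
    ∑ j ∈ range (m + 1), laguerreCoeff β m j * Gamma (1 + β + (i + j : ℕ)) = 0 := by
  set q : ℝ[X] := (ascPochhammer ℝ i).comp (X + C (1 + β))
  have hq : q.natDegree < m := by
    rwa [natDegree_comp, ascPochhammer_natDegree, natDegree_X_add_C, mul_one]
  have hterm (j : ℕ) : laguerreCoeff β m j * Gamma (1 + β + (i + j : ℕ))
      = Gamma (1 + β) * ((-1) ^ j * m.choose j * q.eval (j : ℝ)) := by
    have hpos : 0 < (ascPochhammer ℝ j).eval (1 + β) := ascPochhammer_pos j _ (by linarith)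
    have hGamma : Gamma (1 + β + (i + j : ℕ))
        = Gamma (1 + β) * (ascPochhammer ℝ j).eval (1 + β) * q.eval (j : ℝ) := by
      rw [show 1 + β + ((i + j : ℕ) : ℝ) = (1 + β + j) + i by push_cast; ring,
        Gamma_add_nat_eq_mul_ascPochhammer (by linarith [j.cast_nonneg (α := ℝ)]),
        Gamma_add_nat_eq_mul_ascPochhammer (by linarith)]
      simp [q, eval_comp, add_comm]
    rw [hGamma, laguerreCoeff, ascPochhammer_eval_neg_natCast]
    field_simp
  rw [sum_congr rfl fun j _ => hterm j, ← mul_sum,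
    sum_range_neg_one_pow_mul_choose_mul_eval_eq_zero hq, mul_zero]

theorem sum_sum_laguerreCoeff_mul_Gamma_eq_zero (hβ : -1 < β) {n m : ℕ} (hnm : n ≠ m) :
    ∑ i ∈ range (n + 1), ∑ j ∈ range (m + 1),
      laguerreCoeff β n i * laguerreCoeff β m j * Gamma (1 + β + (i + j : ℕ)) = 0 := by
  rcases hnm.lt_or_gt with hlt | hgt
  · refine sum_eq_zero fun i hi => ?_
    simp_rw [mul_assoc, ← mul_sum]
    rw [sum_laguerreCoeff_mul_Gamma_eq_zero hβ (by grind), mul_zero]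
  · rw [sum_comm]
    refine sum_eq_zero fun j hj => ?_
    simp_rw [mul_comm (laguerreCoeff β n _), mul_assoc, ← mul_sum, add_comm _ j]
    rw [sum_laguerreCoeff_mul_Gamma_eq_zero hβ (by grind), mul_zero]

end Laguerre

section GaussianMoments

variable {β : ℝ}

theorem rpow_mul_exp_mul_pow_eq {r : ℝ} (hr : 0 < r) (k : ℕ) :
    r ^ (1 + 2 * β) * exp (-r ^ 2 / 2) * (r ^ 2 / 2) ^ k
      = (2 ^ k)⁻¹ * (r ^ (1 + 2 * β + 2 * k) * exp (-(1 / 2) * r ^ 2)) := by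
  rw [rpow_add hr (1 + 2 * β), show (2 : ℝ) * k = (2 * k : ℕ) by push_cast; ring, rpow_natCast,
    div_pow, ← pow_mul]
  ring_nf

theorem integrableOn_rpow_mul_exp_mul_pow (hβ : -1 < β) (k : ℕ) :
    IntegrableOn (fun r : ℝ => r ^ (1 + 2 * β) * exp (-r ^ 2 / 2) * (r ^ 2 / 2) ^ k)
      (Set.Ioi 0) := by
  refine IntegrableOn.congr_fun ?_ (fun r hr => (rpow_mul_exp_mul_pow_eq hr k).symm)
    measurableSet_Ioi
  refine (integrableOn_rpow_mul_exp_neg_mul_sq (by norm_num) ?_).const_mul _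
  linarith [k.cast_nonneg (α := ℝ)]

theorem integral_rpow_mul_exp_mul_pow (hβ : -1 < β) (k : ℕ) :
    ∫ r in Set.Ioi (0 : ℝ), r ^ (1 + 2 * β) * exp (-r ^ 2 / 2) * (r ^ 2 / 2) ^ k
      = 2 ^ β * Gamma (1 + β + k) := by
  have hq : -1 < 1 + 2 * β + 2 * k := by linarith [k.cast_nonneg (α := ℝ)]
  rw [setIntegral_congr_fun measurableSet_Ioi fun r hr => rpow_mul_exp_mul_pow_eq hr k,
    integral_const_mul]
  simp_rw [← rpow_two]
  rw [integral_rpow_mul_exp_neg_mul_rpow two_pos hq one_half_pos,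
    show (1 + 2 * β + 2 * k + 1) / 2 = 1 + β + k by ring,
    show -(1 + 2 * β + 2 * k + 1) / 2 = -(1 + β + k) by ring, one_div, inv_rpow zero_le_two,
    rpow_neg zero_le_two, inv_inv, rpow_add two_pos, rpow_add two_pos, rpow_one, rpow_natCast]
  field_simp

theorem integral_rpow_mul_exp_mul_sum_mul_sum (hβ : -1 < β) (c d : ℕ → ℝ) (s t : Finset ℕ) :
    ∫ r in Set.Ioi (0 : ℝ), r ^ (1 + 2 * β) * exp (-r ^ 2 / 2) *
        ((∑ i ∈ s, c i * (r ^ 2 / 2) ^ i) * ∑ j ∈ t, d j * (r ^ 2 / 2) ^ j)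
      = 2 ^ β * ∑ i ∈ s, ∑ j ∈ t, c i * d j * Gamma (1 + β + (i + j : ℕ)) := by
  have hexpand (r : ℝ) : r ^ (1 + 2 * β) * exp (-r ^ 2 / 2) *
        ((∑ i ∈ s, c i * (r ^ 2 / 2) ^ i) * ∑ j ∈ t, d j * (r ^ 2 / 2) ^ j)
      = ∑ i ∈ s, ∑ j ∈ t,
          c i * d j * (r ^ (1 + 2 * β) * exp (-r ^ 2 / 2) * (r ^ 2 / 2) ^ (i + j)) := by
    rw [sum_mul_sum, mul_sum]
    refine sum_congr rfl fun i _ => ?_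
    rw [mul_sum]
    refine sum_congr rfl fun j _ => ?_
    ring
  have hint (i j : ℕ) := (integrableOn_rpow_mul_exp_mul_pow hβ (i + j)).const_mul (c i * d j)
  simp_rw [hexpand]
  rw [integral_finsetSum _ fun i _ => integrable_finsetSum _ fun j _ => hint i j, mul_sum]
  refine sum_congr rfl fun i _ => ?_
  rw [integral_finsetSum _ fun j _ => hint i j, mul_sum]
  refine sum_congr rfl fun j _ => ?_
  rw [integral_const_mul, integral_rpow_mul_exp_mul_pow hβ]
  ring

end GaussianMoments

noncomputable def betaPar (N : ℕ) (a : ℝ) : ℝ :=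
  √((((N : ℝ) - 2) / 2) ^ 2 + a)

theorem alphaPar_eq_sub_betaPar (N : ℕ) (a : ℝ) : alphaPar N a = ((N : ℝ) - 2) / 2 - betaPar N a :=
  rfl

theorem PPol_eq_sum_laguerreCoeff (N : ℕ) (a : ℝ) (n : ℕ) (t : ℝ) :
    PPol N a n t = ∑ i ∈ range (n + 1), laguerreCoeff (betaPar N a) n i * t ^ i := by
  have hshift : (N : ℝ) / 2 - alphaPar N a = 1 + betaPar N a := by
    rw [alphaPar_eq_sub_betaPar]; ring
  refine sum_congr rfl fun i _ => ?_
  rw [laguerreCoeff, hshift]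
  ring

theorem integral_VFun_mul_VFun {N : ℕ} (hN : 0 < N) (a : ℝ) (n m : ℕ) :
    ∫ x : EuclideanSpace ℝ (Fin N), VFun N a n x * VFun N a m x
      = N • volume.real (Metric.ball (0 : EuclideanSpace ℝ (Fin N)) 1) •
          ∫ r in Set.Ioi (0 : ℝ), r ^ (1 + 2 * betaPar N a) * exp (-r ^ 2 / 2) *
            (PPol N a n (r ^ 2 / 2) * PPol N a m (r ^ 2 / 2)) := by
  have : Nonempty (Fin N) := ⟨⟨0, hN⟩⟩
  refine (integral_fun_norm_addHaar volume fun r =>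
    (r ^ (-alphaPar N a) * exp (-r ^ 2 / 4) * PPol N a n (r ^ 2 / 2)) *
      (r ^ (-alphaPar N a) * exp (-r ^ 2 / 4) * PPol N a m (r ^ 2 / 2))).trans ?_
  rw [finrank_euclideanSpace_fin]
  congr 2
  refine setIntegral_congr_fun measurableSet_Ioi fun r (hr : 0 < r) => ?_
  have hpow : r ^ (N - 1) * (r ^ (-alphaPar N a) * r ^ (-alphaPar N a))
      = r ^ (1 + 2 * betaPar N a) := by
    rw [← rpow_natCast, Nat.cast_sub hN, ← rpow_add hr, ← rpow_add hr, alphaPar_eq_sub_betaPar]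
    congr 1
    push_cast
    ring
  have hexp : exp (-r ^ 2 / 4) * exp (-r ^ 2 / 4) = exp (-r ^ 2 / 2) := by
    rw [← exp_add]; ring_nf
  rw [smul_eq_mul, ← hpow, ← hexp]
  ring

theorem VFun_orthogonal_general
    (N : ℕ) (hN : 3 ≤ N) (a : ℝ)
    (n m : ℕ) (hnm : n ≠ m) :
    ∫ x : EuclideanSpace ℝ (Fin N), VFun N a n x * VFun N a m x = 0 := by
  have hβ : -1 < betaPar N a := neg_one_lt_zero.trans_le (sqrt_nonneg _)
  rw [integral_VFun_mul_VFun (by omega : 0 < N)]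
  simp_rw [PPol_eq_sum_laguerreCoeff, integral_rpow_mul_exp_mul_sum_mul_sum hβ,
    sum_sum_laguerreCoeff_mul_Gamma_eq_zero hβ hnm, mul_zero, smul_zero]

theorem VFun_orthogonal
    (N : ℕ) (hN : 3 ≤ N) (a : ℝ) (ha : a > -((((N : ℝ) - 2) / 2) ^ 2))
    (n m : ℕ) (hnm : n ≠ m) :
    ∫ x : EuclideanSpace ℝ (Fin N), VFun N a n x * VFun N a m x = 0 :=
  VFun_orthogonal_general N hN a n m hnm
end

section
/- Let N ≥ 3 be an integer, a ∈ ℝ with a > −((N−2)/2)², α = (N−2)/2 − √(((N−2)/2)² + a), and n ∈ ℕ. Let u(x,t) = (1+t²)^(−N/4+α/2) · |x|^(−α) · exp(−|x|²/(4(1+t²))) · exp(i t |x|²/(4(1+t²))) · exp(−i (2n − α + N/2) arctan t) · P_n(|x|²/(2(1+t²))). Then the L² norm of u is conserved in time: for every t ∈ ℝ, ∫_{ℝ^N} |u(x,t)|² dx = ∫_{ℝ^N} |V_n(x)|² dx. -/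
open MeasureTheory Real

/-! The phase factors of `u` have modulus one, and its amplitude is the `L²`-normalised dilation
of `V_n` by `c = √(1 + t²)`: `|u(x,t)|² = c⁻ᴺ |V_n(c⁻¹ x)|²`. The change of variables `x ↦ c x`
for the Haar measure on `ℝᴺ` multiplies the integral by `cᴺ`, which cancels the prefactor. -/

open Module ENNReal

namespace MeasureTheory.Measure

variable {E : Type*} [NormedAddCommGroup E] [NormedSpace ℝ E] [MeasurableSpace E] [BorelSpace E]
  [FiniteDimensional ℝ E] (μ : Measure E) [μ.IsAddHaarMeasure]

theorem lintegral_comp_inv_smul (g : E → ℝ≥0∞) {R : ℝ} (hR : R ≠ 0) :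
    ∫⁻ x, g (R⁻¹ • x) ∂μ = ENNReal.ofReal |R ^ finrank ℝ E| * ∫⁻ x, g x ∂μ := by
  have hR' : R⁻¹ ≠ 0 := inv_ne_zero hR
  have := lintegral_map_equiv g (MeasurableEquiv.smul₀ R⁻¹ hR') (μ := μ)
  rw [MeasurableEquiv.coe_smul₀, Measure.map_addHaar_smul μ hR'] at this
  rw [← this, lintegral_smul_measure, inv_pow, inv_inv, smul_eq_mul]

theorem lintegral_enorm_sq_dilation {F : Type*} [NormedAddCommGroup F] (f : E → F) {c : ℝ}
    (hc : 0 < c) :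
    ∫⁻ x, ENNReal.ofReal ((c ^ finrank ℝ E)⁻¹) * ‖f (c⁻¹ • x)‖ₑ ^ 2 ∂μ = ∫⁻ x, ‖f x‖ₑ ^ 2 ∂μ := by
  have hcd : 0 < c ^ finrank ℝ E := pow_pos hc _
  rw [lintegral_const_mul' _ _ ofReal_ne_top, lintegral_comp_inv_smul μ (fun y ↦ ‖f y‖ₑ ^ 2) hc.ne',
    ← mul_assoc, ← ofReal_mul (inv_nonneg.2 hcd.le), abs_of_pos hcd, inv_mul_cancel₀ hcd.ne',
    ofReal_one, one_mul]

end MeasureTheory.Measure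

theorem VFun_inv_smul (N : ℕ) (a : ℝ) (n : ℕ) {c : ℝ} (hc : 0 < c)
    (x : EuclideanSpace ℝ (Fin N)) :
    VFun N a n (c⁻¹ • x) = c ^ alphaPar N a * ‖x‖ ^ (-alphaPar N a) *
      Real.exp (-‖x‖ ^ 2 / (4 * c ^ 2)) * PPol N a n (‖x‖ ^ 2 / (2 * c ^ 2)) := by
  have hnorm : ‖c⁻¹ • x‖ = c⁻¹ * ‖x‖ := by
    rw [norm_smul, Real.norm_eq_abs, abs_of_pos (inv_pos.2 hc)]
  rw [VFun, hnorm, Real.mul_rpow (inv_nonneg.2 hc.le) (norm_nonneg x), Real.inv_rpow hc.le,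
    Real.rpow_neg hc.le, inv_inv, show (c⁻¹ * ‖x‖) ^ 2 = ‖x‖ ^ 2 / c ^ 2 by ring]
  ring_nf

theorem sq_rpow_sq_eq_inv_pow_mul {c : ℝ} (hc : 0 < c) (d : ℕ) (β : ℝ) :
    ((c ^ 2) ^ (-(d : ℝ) / 4 + β / 2)) ^ 2 = (c ^ d)⁻¹ * (c ^ β) ^ 2 := by
  simp only [← Real.rpow_natCast, ← Real.rpow_mul hc.le, ← Real.rpow_neg hc.le,
    ← Real.rpow_add hc]
  ring_nf

theorem amplitude_sq_eq (N : ℕ) (a : ℝ) (n : ℕ) {c : ℝ} (hc : 0 < c)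
    (x : EuclideanSpace ℝ (Fin N)) :
    ((c ^ 2) ^ (-(N : ℝ) / 4 + alphaPar N a / 2) * ‖x‖ ^ (-alphaPar N a) *
        Real.exp (-‖x‖ ^ 2 / (4 * c ^ 2)) * PPol N a n (‖x‖ ^ 2 / (2 * c ^ 2))) ^ 2 =
      (c ^ N)⁻¹ * VFun N a n (c⁻¹ • x) ^ 2 := by
  rw [VFun_inv_smul N a n hc, mul_assoc, mul_assoc, mul_pow, sq_rpow_sq_eq_inv_pow_mul hc]
  ring

theorem L2_norm_conservation_general
    (N : ℕ) (a : ℝ) (n : ℕ)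
    (u : EuclideanSpace ℝ (Fin N) → ℝ → ℂ)
    (hu : ∀ (x : EuclideanSpace ℝ (Fin N)) (t : ℝ), u x t =
      (((1 + t ^ 2) ^ (-(N : ℝ) / 4 + alphaPar N a / 2) : ℝ) : ℂ) *
      ((‖x‖ ^ (-(alphaPar N a)) : ℝ) : ℂ) *
      ((Real.exp (-‖x‖ ^ 2 / (4 * (1 + t ^ 2))) : ℝ) : ℂ) *
      Complex.exp (Complex.I * ((t * ‖x‖ ^ 2 / (4 * (1 + t ^ 2)) : ℝ) : ℂ)) *
      Complex.exp (-Complex.I *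
        (((2 * (n : ℝ) - alphaPar N a + (N : ℝ) / 2) * Real.arctan t : ℝ) : ℂ)) *
      ((PPol N a n (‖x‖ ^ 2 / (2 * (1 + t ^ 2))) : ℝ) : ℂ)) :
    ∀ t : ℝ,
      (∫⁻ x, (‖u x t‖₊ : ENNReal) ^ 2
          ∂(volume : Measure (EuclideanSpace ℝ (Fin N)))) =
      ∫⁻ x, (‖VFun N a n x‖₊ : ENNReal) ^ 2
          ∂(volume : Measure (EuclideanSpace ℝ (Fin N))) := by
  intro t
  set c := √(1 + t ^ 2)
  have hc : 0 < c := Real.sqrt_pos.2 (by positivity)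
  have hc2 : c ^ 2 = 1 + t ^ 2 := Real.sq_sqrt (by positivity)
  have hpt (x : EuclideanSpace ℝ (Fin N)) :
      ‖u x t‖ ^ 2 = (c ^ N)⁻¹ * ‖VFun N a n (c⁻¹ • x)‖ ^ 2 := by
    rw [Real.norm_eq_abs, sq_abs, ← amplitude_sq_eq N a n hc, hu, ← hc2]
    simp only [norm_mul, Complex.norm_real, Real.norm_eq_abs, Complex.norm_exp_I_mul_ofReal,
      neg_mul, ← Complex.ofReal_neg, ← mul_neg, mul_one, ← abs_mul, sq_abs]
  simp only [← enorm_eq_nnnorm]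
  calc ∫⁻ x, ‖u x t‖ₑ ^ 2 = ∫⁻ x, ENNReal.ofReal ((c ^ N)⁻¹) * ‖VFun N a n (c⁻¹ • x)‖ₑ ^ 2 := by
        refine lintegral_congr fun x ↦ ?_
        rw [← ofReal_norm, ← ofReal_norm, ← ofReal_pow (norm_nonneg _),
          ← ofReal_pow (norm_nonneg _), ← ofReal_mul (by positivity), hpt]
    _ = ∫⁻ x, ‖VFun N a n x‖ₑ ^ 2 := by
        simpa [finrank_euclideanSpace_fin] using
          Measure.lintegral_enorm_sq_dilation volume (VFun N a n) hc

theorem L2_norm_conservation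
    (N : ℕ) (hN : 3 ≤ N) (a : ℝ) (ha : a > -((((N : ℝ) - 2) / 2) ^ 2)) (n : ℕ)
    (u : EuclideanSpace ℝ (Fin N) → ℝ → ℂ)
    (hu : ∀ (x : EuclideanSpace ℝ (Fin N)) (t : ℝ), u x t =
      (((1 + t ^ 2) ^ (-(N : ℝ) / 4 + alphaPar N a / 2) : ℝ) : ℂ) *
      ((‖x‖ ^ (-(alphaPar N a)) : ℝ) : ℂ) *
      ((Real.exp (-‖x‖ ^ 2 / (4 * (1 + t ^ 2))) : ℝ) : ℂ) *
      Complex.exp (Complex.I * ((t * ‖x‖ ^ 2 / (4 * (1 + t ^ 2)) : ℝ) : ℂ)) *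
      Complex.exp (-Complex.I *
        (((2 * (n : ℝ) - alphaPar N a + (N : ℝ) / 2) * Real.arctan t : ℝ) : ℂ)) *
      ((PPol N a n (‖x‖ ^ 2 / (2 * (1 + t ^ 2))) : ℝ) : ℂ)) :
    ∀ t : ℝ,
      (∫⁻ x, (‖u x t‖₊ : ENNReal) ^ 2
          ∂(volume : Measure (EuclideanSpace ℝ (Fin N)))) =
      ∫⁻ x, (‖VFun N a n x‖₊ : ENNReal) ^ 2
          ∂(volume : Measure (EuclideanSpace ℝ (Fin N))) :=
  L2_norm_conservation_general N a n u hu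
end

section
/- Let N ≥ 3 be an integer, a ≥ 0, and α = (N−2)/2 − √(((N−2)/2)² + a), so that α ≤ 0. Let u(x,t) = (1+t²)^(−N/4+α/2) · |x|^(−α) · exp(−|x|²/(4(1+t²))) · exp(i t |x|²/(4(1+t²))) · exp(−i (N/2 − α) arctan t), a solution of the Schrödinger equation i ∂_t u = −Δu + a u/|x|². Then the weighted improved time decay holds: for every x ≠ 0 and every t ∈ ℝ, |x|^α · |u(x,t)| ≤ (1+t²)^(−N/4+α/2); in particular the weighted sup norm sup_{x≠0} |x|^α |u(x,t)| decays like |t|^(−N/2+α) as |t| → ∞, faster than the classical rate |t|^(−N/2). -/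
/-! The modulus of `u` is the real Gaussian profile `(1+t²)^(-N/4+α/2) |x|^(-α) e^{-|x|²/(4(1+t²))}`:
both phases are unimodular. The weight `|x|^α` cancels `|x|^(-α)`, and the Gaussian factor is
at most `1`. The sign `α ≤ 0` is just `√(b² + a) ≥ b` for `a ≥ 0`. -/

open MeasureTheory Real

lemma alphaPar_nonpos (N : ℕ) {a : ℝ} (ha : 0 ≤ a) : alphaPar N a ≤ 0 :=
  sub_nonpos.mpr (Real.le_sqrt_of_sq_le (le_add_of_nonneg_right ha))

lemma Complex.norm_exp_neg_I_mul_ofReal (r : ℝ) : ‖Complex.exp (-Complex.I * r)‖ = 1 := by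
  simpa using Complex.norm_exp_I_mul_ofReal (-r)

lemma norm_ofReal_mul_exp_I_mul_mul_exp_neg_I_mul (A θ φ : ℝ) :
    ‖(A : ℂ) * Complex.exp (Complex.I * θ) * Complex.exp (-Complex.I * φ)‖ = |A| := by
  rw [norm_mul, norm_mul, Complex.norm_exp_I_mul_ofReal, Complex.norm_exp_neg_I_mul_ofReal,
    Complex.norm_real, Real.norm_eq_abs, mul_one, mul_one]

lemma rpow_mul_rpow_neg {r : ℝ} (hr : 0 < r) (α : ℝ) : r ^ α * r ^ (-α) = 1 := by
  rw [← Real.rpow_add hr, add_neg_cancel, Real.rpow_zero]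

theorem improved_schrodinger_decay_general
    (N : ℕ) (a : ℝ) (ha : 0 ≤ a)
    (u : EuclideanSpace ℝ (Fin N) → ℝ → ℂ)
    (hu : ∀ (x : EuclideanSpace ℝ (Fin N)) (t : ℝ), u x t =
      (((1 + t ^ 2) ^ (-(N : ℝ) / 4 + alphaPar N a / 2) : ℝ) : ℂ) *
      ((‖x‖ ^ (-(alphaPar N a)) : ℝ) : ℂ) *
      ((Real.exp (-‖x‖ ^ 2 / (4 * (1 + t ^ 2))) : ℝ) : ℂ) *
      Complex.exp (Complex.I * ((t * ‖x‖ ^ 2 / (4 * (1 + t ^ 2)) : ℝ) : ℂ)) *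
      Complex.exp (-Complex.I * ((((N : ℝ) / 2 - alphaPar N a) * Real.arctan t : ℝ) : ℂ))) :
    alphaPar N a ≤ 0 ∧
    ∀ (x : EuclideanSpace ℝ (Fin N)), x ≠ 0 → ∀ t : ℝ,
      ‖x‖ ^ (alphaPar N a) * ‖u x t‖ ≤
        (1 + t ^ 2) ^ (-(N : ℝ) / 4 + alphaPar N a / 2) := by
  refine ⟨alphaPar_nonpos N ha, fun x hx t => ?_⟩
  set α := alphaPar N a
  set c := (1 + t ^ 2) ^ (-(N : ℝ) / 4 + α / 2)
  have hc : 0 ≤ c := Real.rpow_nonneg (by positivity) _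
  have hx₀ : 0 < ‖x‖ := norm_pos_iff.mpr hx
  have hgauss : Real.exp (-‖x‖ ^ 2 / (4 * (1 + t ^ 2))) ≤ 1 :=
    Real.exp_le_one_iff.mpr (div_nonpos_of_nonpos_of_nonneg (neg_nonpos.mpr (sq_nonneg _)) (by positivity))
  have hnorm : ‖u x t‖ = c * ‖x‖ ^ (-α) * Real.exp (-‖x‖ ^ 2 / (4 * (1 + t ^ 2))) := by
    rw [hu, ← Complex.ofReal_mul, ← Complex.ofReal_mul,
      norm_ofReal_mul_exp_I_mul_mul_exp_neg_I_mul, abs_of_nonneg (by positivity)]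
  calc ‖x‖ ^ α * ‖u x t‖
      = c * Real.exp (-‖x‖ ^ 2 / (4 * (1 + t ^ 2))) * (‖x‖ ^ α * ‖x‖ ^ (-α)) := by
        rw [hnorm]; ring
    _ ≤ c := by rw [rpow_mul_rpow_neg hx₀, mul_one]; exact mul_le_of_le_one_right hc hgauss

theorem improved_schrodinger_decay
    (N : ℕ) (hN : 3 ≤ N) (a : ℝ) (ha : 0 ≤ a)
    (u : EuclideanSpace ℝ (Fin N) → ℝ → ℂ)
    (hu : ∀ (x : EuclideanSpace ℝ (Fin N)) (t : ℝ), u x t =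
      (((1 + t ^ 2) ^ (-(N : ℝ) / 4 + alphaPar N a / 2) : ℝ) : ℂ) *
      ((‖x‖ ^ (-(alphaPar N a)) : ℝ) : ℂ) *
      ((Real.exp (-‖x‖ ^ 2 / (4 * (1 + t ^ 2))) : ℝ) : ℂ) *
      Complex.exp (Complex.I * ((t * ‖x‖ ^ 2 / (4 * (1 + t ^ 2)) : ℝ) : ℂ)) *
      Complex.exp (-Complex.I * ((((N : ℝ) / 2 - alphaPar N a) * Real.arctan t : ℝ) : ℂ))) :
    alphaPar N a ≤ 0 ∧
    ∀ (x : EuclideanSpace ℝ (Fin N)), x ≠ 0 → ∀ t : ℝ,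
      ‖x‖ ^ (alphaPar N a) * ‖u x t‖ ≤
        (1 + t ^ 2) ^ (-(N : ℝ) / 4 + alphaPar N a / 2) :=
  improved_schrodinger_decay_general N a ha u hu
end
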